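/- arXiv:1402.6140 — 2 statements merged into one kernel-verified Lean document; each statement's English description precedes it below -/
import Mathlib

section
/- Let ψ_n(λ) := ((1/N)·Σ_{k=0}^{N−1} exp(iλβω_k / n^{1/N}))^n be the characteristic function of the normalized random walk S̃_n. Then for every real λ the following second-order asymptotic holds: lim_{n→∞} n·( ψ_n(λ) − exp(i^N α λ^N / N!) ) = (−1)^N · ( 1/(2N)! − 1/(2·(N!)^2) ) · α^2 · λ^{2N} · exp(i^N α λ^N / N!). -/
/-!
Averaging `exp (z ω)` over the `N`-th roots of unity `ω` keeps exactly the terms of the exponential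
series whose degree is a multiple of `N`, so `ψ_n(λ) = F_N(z_n)` with
`F_N(z) = ∑ z^{Nj}/(Nj)!` and `z_n = iλβ/n^{1/N}`. Since `z_n^N = w/n` with `w = i^N α λ^N`, this
gives `ψ_n = 1 + A/n + B/n² + O(n⁻³)` with `A = w/N!` and `B = w²/(2N)!`. For any such sequence,
`n log ψ_n = A + (B - A²/2)/n + o(1/n)`, hence `n (ψ_n^n - e^A) → e^A (B - A²/2)`.
-/

open Complex Real Filter Finset Asymptotics Topology

section SequenceAsymptotics

variable {δ t : ℕ → ℂ} {a : ℂ}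

lemma tendsto_zero_of_tendsto_natCast_mul
    (h : Tendsto (fun n : ℕ => (n : ℂ) * δ n) atTop (𝓝 a)) :
    Tendsto δ atTop (𝓝 0) := by
  have h' := h.mul (tendsto_inv_atTop_nhds_zero_nat (𝕜 := ℂ))
  rw [mul_zero] at h'
  refine h'.congr' ?_
  filter_upwards [eventually_ne_atTop 0] with n hn
  field_simp

lemma tendsto_sq_mul_log_one_add_sub (h : Tendsto (fun n : ℕ => (n : ℂ) * δ n) atTop (𝓝 a)) :
    Tendsto (fun n : ℕ => (n : ℂ) ^ 2 * (log (1 + δ n) - (δ n - δ n ^ 2 / 2))) atTop (𝓝 0) := by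
  have hT (w : ℂ) : logTaylor 3 w = w - w ^ 2 / 2 := by
    norm_num [logTaylor_succ, logTaylor_zero, sub_eq_add_neg, neg_div]
  have hO : (fun n => log (1 + δ n) - (δ n - δ n ^ 2 / 2)) =O[atTop] fun n => δ n ^ 3 := by
    simpa [Function.comp_def, hT] using
      (log_sub_logTaylor_isBigO 2).comp_tendsto (tendsto_zero_of_tendsto_natCast_mul h)
  have hlim : Tendsto (fun n : ℕ => ((n : ℂ) * δ n) ^ 2 * δ n) atTop (𝓝 0) := by
    simpa using (h.pow 2).mul (tendsto_zero_of_tendsto_natCast_mul h)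
  refine ((isBigO_refl (fun n : ℕ => (n : ℂ) ^ 2) atTop).mul hO).trans_tendsto ?_
  refine hlim.congr fun n => ?_
  ring

lemma tendsto_mul_exp_sub_one_sub (h : Tendsto (fun n : ℕ => (n : ℂ) * t n) atTop (𝓝 a)) :
    Tendsto (fun n : ℕ => (n : ℂ) * (exp (t n) - 1 - t n)) atTop (𝓝 0) := by
  have hO : (fun n => exp (t n) - 1 - t n) =O[atTop] fun n => t n ^ 2 := by
    simpa [Function.comp_def, sum_range_succ, sub_sub] using
      (Complex.exp_sub_sum_range_isBigO_pow 2).comp_tendsto (tendsto_zero_of_tendsto_natCast_mul h)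
  have hlim : Tendsto (fun n : ℕ => ((n : ℂ) * t n) * t n) atTop (𝓝 0) := by
    simpa using h.mul (tendsto_zero_of_tendsto_natCast_mul h)
  refine ((isBigO_refl (fun n : ℕ => (n : ℂ)) atTop).mul hO).trans_tendsto ?_
  refine hlim.congr fun n => ?_
  ring

lemma tendsto_mul_exp_sub_exp {A c : ℂ}
    (h : Tendsto (fun n : ℕ => (n : ℂ) * (t n - A)) atTop (𝓝 c)) :
    Tendsto (fun n : ℕ => (n : ℂ) * (exp (t n) - exp A)) atTop (𝓝 (exp A * c)) := by
  have hsum := (h.add (tendsto_mul_exp_sub_one_sub h)).const_mul (exp A)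
  rw [add_zero] at hsum
  refine hsum.congr fun n => ?_
  rw [show exp (t n) = exp A * exp (t n - A) by rw [← Complex.exp_add, add_sub_cancel]]
  ring

variable {g : ℕ → ℂ} {A B : ℂ}

lemma tendsto_mul_mul_log_sub
    (h : Tendsto (fun n : ℕ => (n : ℂ) * (n * (g n - 1) - A)) atTop (𝓝 B)) :
    Tendsto (fun n : ℕ => (n : ℂ) * (n * log (g n) - A)) atTop (𝓝 (B - A ^ 2 / 2)) := by
  have hA : Tendsto (fun n : ℕ => (n : ℂ) * (g n - 1)) atTop (𝓝 A) :=
    tendsto_sub_nhds_zero_iff.mp (tendsto_zero_of_tendsto_natCast_mul h)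
  have hsum := ((tendsto_sq_mul_log_one_add_sub hA).add h).sub ((hA.pow 2).div_const 2)
  rw [zero_add] at hsum
  refine hsum.congr fun n => ?_
  rw [add_sub_cancel]
  ring

lemma tendsto_mul_pow_sub_exp
    (h : Tendsto (fun n : ℕ => (n : ℂ) * (n * (g n - 1) - A)) atTop (𝓝 B)) :
    Tendsto (fun n : ℕ => (n : ℂ) * (g n ^ n - exp A)) atTop
      (𝓝 (exp A * (B - A ^ 2 / 2))) := by
  have hA : Tendsto (fun n : ℕ => (n : ℂ) * (g n - 1)) atTop (𝓝 A) :=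
    tendsto_sub_nhds_zero_iff.mp (tendsto_zero_of_tendsto_natCast_mul h)
  have hg : Tendsto g atTop (𝓝 1) :=
    tendsto_sub_nhds_zero_iff.mp (tendsto_zero_of_tendsto_natCast_mul hA)
  refine (tendsto_mul_exp_sub_exp (tendsto_mul_mul_log_sub h)).congr' ?_
  filter_upwards [hg.eventually_ne one_ne_zero] with n hn
  rw [Complex.exp_nat_mul, Complex.exp_log hn]

end SequenceAsymptotics

lemma IsPrimitiveRoot.geom_sum_pow_eq_ite {R : Type*} [CommRing R] [IsDomain R] {ζ : R} {N : ℕ}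
    (hζ : IsPrimitiveRoot ζ N) (m : ℕ) :
    ∑ k ∈ range N, (ζ ^ m) ^ k = if N ∣ m then (N : R) else 0 := by
  split_ifs with hm
  · simp [(hζ.pow_eq_one_iff_dvd m).mpr hm]
  · have hne : ζ ^ m - 1 ≠ 0 := sub_ne_zero.mpr fun h => hm ((hζ.pow_eq_one_iff_dvd m).mp h)
    have hgeom := geom_sum_mul (ζ ^ m) N
    rw [← pow_mul, mul_comm m, pow_mul, hζ.pow_eq_one, one_pow, sub_self] at hgeom
    exact (mul_eq_zero.mp hgeom).resolve_right hne

noncomputable def expMultisection (N : ℕ) (z : ℂ) : ℂ :=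
  ∑' j : ℕ, z ^ (N * j) / ((N * j).factorial : ℂ)

section expMultisection

variable {N : ℕ}

lemma summable_expMultisection (hN : N ≠ 0) (z : ℂ) :
    Summable fun j : ℕ => z ^ (N * j) / ((N * j).factorial : ℂ) :=
  (NormedSpace.expSeries_div_summable z).comp_injective (mul_right_injective₀ hN)

lemma sum_exp_mul_rootOfUnity_eq (hN : N ≠ 0) (z : ℂ) :
    ∑ k ∈ range N, exp (z * exp (2 * π * I * k / N)) = N * expMultisection N z := by
  set ζ := exp (2 * π * I / N)
  have hζ : IsPrimitiveRoot ζ N := Complex.isPrimitiveRoot_exp N hN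
  have hroot (k : ℕ) : exp (2 * π * I * k / N) = ζ ^ k := by
    rw [← Complex.exp_nat_mul]
    ring_nf
  have hsupp : Function.support (fun m : ℕ => z ^ m / (m.factorial : ℂ) *
      (if N ∣ m then (N : ℂ) else 0)) ⊆ Set.range (N * ·) := by
    intro m hm
    by_cases hNm : N ∣ m
    · obtain ⟨j, rfl⟩ := hNm
      exact ⟨j, rfl⟩
    · simp [hNm] at hm
  calc ∑ k ∈ range N, exp (z * exp (2 * π * I * k / N))
      = ∑ k ∈ range N, ∑' m : ℕ, (z * ζ ^ k) ^ m / (m.factorial : ℂ) := by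
        simp_rw [hroot, Complex.exp_eq_exp_ℂ, NormedSpace.exp_eq_tsum_div]
    _ = ∑' m : ℕ, ∑ k ∈ range N, (z * ζ ^ k) ^ m / (m.factorial : ℂ) :=
        (Summable.tsum_finsetSum fun k _ => NormedSpace.expSeries_div_summable _).symm
    _ = ∑' m : ℕ, z ^ m / (m.factorial : ℂ) * (if N ∣ m then (N : ℂ) else 0) := by
        refine tsum_congr fun m => ?_
        rw [← hζ.geom_sum_pow_eq_ite m, Finset.mul_sum]
        refine Finset.sum_congr rfl fun k _ => ?_
        rw [mul_pow, ← pow_mul, ← pow_mul, mul_comm k m]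
        ring
    _ = N * expMultisection N z := by
        rw [← (mul_right_injective₀ hN).tsum_eq hsupp, expMultisection, ← tsum_mul_left]
        refine tsum_congr fun j => ?_
        simp only [dvd_mul_right, if_true]
        ring

lemma norm_expMultisection_sub_le (hN : N ≠ 0) {z : ℂ} (hz : ‖z‖ ≤ 1) :
    ‖expMultisection N z - (1 + z ^ N / (N.factorial : ℂ) + z ^ (2 * N) / ((2 * N).factorial : ℂ))‖
      ≤ ‖z‖ ^ (3 * N) * Real.exp 1 := by
  have hsplit := (summable_expMultisection hN z).sum_add_tsum_nat_add 3
  simp only [Finset.sum_range_succ, Finset.sum_range_zero, mul_zero, mul_one, pow_zero,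
    Nat.factorial_zero, Nat.cast_one, div_one, zero_add, mul_comm N 2] at hsplit
  rw [expMultisection, ← hsplit, add_sub_cancel_left]
  have hexp : HasSum (fun j : ℕ => ‖z‖ ^ (3 * N) * (1 ^ j / (j.factorial : ℝ)))
      (‖z‖ ^ (3 * N) * Real.exp 1) := by
    rw [Real.exp_eq_exp_ℝ]
    exact (NormedSpace.expSeries_div_hasSum_exp (1 : ℝ)).mul_left _
  refine tsum_of_norm_bounded hexp fun j => ?_
  rw [norm_div, norm_pow, Complex.norm_natCast, one_pow, mul_one_div]
  have hpow : ‖z‖ ^ (N * (j + 3)) ≤ ‖z‖ ^ (3 * N) :=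
    pow_le_pow_of_le_one (norm_nonneg z) hz (by nlinarith)
  have hfac : (j.factorial : ℝ) ≤ (N * (j + 3)).factorial := by
    exact_mod_cast Nat.factorial_le (by nlinarith [Nat.one_le_iff_ne_zero.mpr hN])
  gcongr

lemma tendsto_expMultisection_of_pow_eq (hN : N ≠ 0) {w : ℂ} {z : ℕ → ℂ}
    (hz : ∀ n : ℕ, z n ^ N = w / n) :
    Tendsto (fun n : ℕ => (n : ℂ) * (n * (expMultisection N (z n) - 1) - w / N.factorial))
      atTop (𝓝 (w ^ 2 / (2 * N).factorial)) := by
  rw [tendsto_iff_norm_sub_tendsto_zero]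
  have hbound := (tendsto_inv_atTop_nhds_zero_nat (𝕜 := ℝ)).const_mul (‖w‖ ^ 3 * Real.exp 1)
  rw [mul_zero] at hbound
  refine squeeze_zero' (Eventually.of_forall fun n => norm_nonneg _) ?_ hbound
  filter_upwards [eventually_gt_atTop 0, eventually_ge_atTop ⌈‖w‖⌉₊] with n hn0 hnw
  have hn : (0 : ℝ) < n := Nat.cast_pos.mpr hn0
  have hzn : ‖z n‖ ^ N = ‖w‖ / n := by rw [← norm_pow, hz, norm_div, Complex.norm_natCast]
  have hz1 : ‖z n‖ ≤ 1 := by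
    rw [← pow_le_one_iff_of_nonneg (norm_nonneg _) hN, hzn, div_le_one hn]
    exact Nat.ceil_le.mp hnw
  have hexpand : (n : ℂ) * (n * (expMultisection N (z n) - 1) - w / N.factorial)
        - w ^ 2 / (2 * N).factorial = (n : ℂ) ^ 2 * (expMultisection N (z n) -
          (1 + z n ^ N / N.factorial + z n ^ (2 * N) / (2 * N).factorial)) := by
    have hnc : (n : ℂ) ≠ 0 := Nat.cast_ne_zero.mpr hn0.ne'
    rw [pow_mul', hz]
    field_simp
    ring
  calc _ = (n : ℝ) ^ 2 * ‖expMultisection N (z n) -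
          (1 + z n ^ N / N.factorial + z n ^ (2 * N) / (2 * N).factorial)‖ := by
        rw [hexpand, norm_mul, norm_pow, Complex.norm_natCast]
    _ ≤ (n : ℝ) ^ 2 * ((‖w‖ / n) ^ 3 * Real.exp 1) := by
        rw [← hzn, ← pow_mul, mul_comm N 3]
        gcongr
        exact norm_expMultisection_sub_le hN hz1
    _ = ‖w‖ ^ 3 * Real.exp 1 * (n : ℝ)⁻¹ := by
        field_simp

end expMultisection

/-- second order asymptotics for the characteristic function
ψ_n(λ) = ((1/N)Σ_{k<N} exp(iλβω_k/n^{1/N}))^n of the normalized random walk: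
lim_n n·(ψ_n(λ) − exp(i^N α λ^N/N!))
  = (−1)^N (1/(2N)! − 1/(2(N!)²)) α² λ^{2N} exp(i^N α λ^N/N!). -/
theorem second_order_asymptotics (N : ℕ) (hN : 2 < N) (α β : ℂ) (hβ : β ^ N = α) (l : ℝ) :
    Filter.Tendsto
      (fun n : ℕ =>
        (n : ℂ) *
          (((1 / (N : ℂ)) *
            ∑ k ∈ Finset.range N,
              Complex.exp (Complex.I * l * β * Complex.exp (2 * Real.pi * Complex.I * k / N) /
                ((((n : ℝ) ^ ((N : ℝ)⁻¹)) : ℝ) : ℂ))) ^ n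
            - Complex.exp (Complex.I ^ N * α * (l : ℂ) ^ N / (Nat.factorial N : ℂ))))
      Filter.atTop
      (nhds ((-1 : ℂ) ^ N *
        (1 / (Nat.factorial (2 * N) : ℂ) - 1 / (2 * (Nat.factorial N : ℂ) ^ 2)) *
        α ^ 2 * (l : ℂ) ^ (2 * N) *
        Complex.exp (Complex.I ^ N * α * (l : ℂ) ^ N / (Nat.factorial N : ℂ)))) := by
  have hN0 : N ≠ 0 := by omega
  set w := I ^ N * α * (l : ℂ) ^ N
  set z : ℕ → ℂ := fun n => I * l * β / (((n : ℝ) ^ (N : ℝ)⁻¹ : ℝ) : ℂ)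
  have hz (n : ℕ) : z n ^ N = w / n := by
    rw [div_pow, ← Complex.ofReal_pow, Real.rpow_inv_natCast_pow (Nat.cast_nonneg n) hN0,
      mul_pow, mul_pow, hβ]
    push_cast
    ring
  have hψ (n : ℕ) : (1 / (N : ℂ)) * ∑ k ∈ range N,
      exp (I * l * β * exp (2 * π * I * k / N) / (((n : ℝ) ^ (N : ℝ)⁻¹ : ℝ) : ℂ))
        = expMultisection N (z n) := by
    have harg (k : ℕ) : I * l * β * exp (2 * π * I * k / N) / (((n : ℝ) ^ (N : ℝ)⁻¹ : ℝ) : ℂ)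
        = z n * exp (2 * π * I * k / N) := div_mul_eq_mul_div .. |>.symm
    simp_rw [harg, sum_exp_mul_rootOfUnity_eq hN0]
    field_simp
  have hw : w ^ 2 = (-1) ^ N * α ^ 2 * (l : ℂ) ^ (2 * N) := by
    rw [mul_pow, mul_pow, ← pow_mul, ← pow_mul, mul_comm N 2, pow_mul, I_sq]
  simp_rw [hψ]
  convert tendsto_mul_pow_sub_exp (tendsto_expMultisection_of_pow_eq hN0 hz) using 2
  rw [div_pow, hw]
  ring
end

section
/- For every real t ≥ 0 and every complex λ, lim_{n→∞} φ_n(t,λ) = exp( i^N · λ^N · α · t / N! ), where φ_n(t,λ) = ((1/N)·Σ_{k=0}^{N−1} exp(iλβω_k / n^{1/N}))^{⌊nt⌋}. -/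
/-! Averaging over the `N`-th roots of unity `ζ ^ k` kills every Taylor coefficient of `exp`
of degree `0 < j < N`, so `(1/N) ∑ₖ exp (z ζ^k) = 1 + z^N/N! + O(z^(N+1))`. For
`z = iλβ / n^(1/N)` this is `1 + (iλβ)^N/(N! n) + o(1/n)`, and raising it to the power
`⌊nt⌋ ≈ nt` gives `exp (t (iλβ)^N / N!)`. -/

open Complex Real Filter Finset Topology Asymptotics Nat

theorem IsPrimitiveRoot.sum_pow_pow_eq_ite {R : Type*} [CommRing R] [IsDomain R] {ζ : R} {N : ℕ}
    (hζ : IsPrimitiveRoot ζ N) (j : ℕ) :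
    ∑ k ∈ range N, (ζ ^ j) ^ k = if N ∣ j then (N : R) else 0 := by
  split_ifs with hj
  · simp [(hζ.pow_eq_one_iff_dvd j).mpr hj]
  · have hne : ζ ^ j - 1 ≠ 0 := sub_ne_zero.mpr fun h => hj ((hζ.pow_eq_one_iff_dvd j).mp h)
    have hgeom := geom_sum_mul (ζ ^ j) N
    rw [pow_right_comm, hζ.pow_eq_one, one_pow, sub_self] at hgeom
    exact (mul_eq_zero.mp hgeom).resolve_right hne

theorem IsPrimitiveRoot.avg_sum_range_pow_div_factorial {K : Type*} [Field K] [CharZero K]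
    {ζ : K} {N : ℕ} (hζ : IsPrimitiveRoot ζ N) (hN : 0 < N) (z : K) :
    (1 / (N : K)) * ∑ k ∈ range N, ∑ i ∈ range (N + 1), (z * ζ ^ k) ^ i / i ! =
      1 + z ^ N / N ! := by
  have hterm : ∀ k i : ℕ, (z * ζ ^ k) ^ i / i ! = z ^ i / i ! * (ζ ^ i) ^ k := fun k i => by
    rw [mul_pow, pow_right_comm]; ring
  have hdvd : (range (N + 1)).filter (N ∣ ·) = {0, N} := by
    ext i
    simp only [mem_filter, mem_range, mem_insert, mem_singleton]
    constructor
    · rintro ⟨hi, c, rfl⟩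
      rcases c with _ | _ | c <;> simp_all
    · rintro (rfl | rfl) <;> simp
  simp_rw [hterm, sum_comm (s := range N), ← mul_sum, hζ.sum_pow_pow_eq_ite, mul_ite, mul_zero,
    ← sum_filter, hdvd, sum_pair hN.ne]
  have hN' : (N : K) ≠ 0 := Nat.cast_ne_zero.mpr hN.ne'
  field_simp
  simp

noncomputable def rootAvgExp (ζ : ℂ) (N : ℕ) (z : ℂ) : ℂ :=
  (1 / (N : ℂ)) * ∑ k ∈ range N, exp (z * ζ ^ k)

theorem isBigO_exp_mul_sub_sum_range (c : ℂ) (n : ℕ) :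
    (fun z => exp (z * c) - ∑ i ∈ range n, (z * c) ^ i / i !) =O[𝓝 0] (· ^ n) := by
  have hc : Tendsto (· * c) (𝓝 (0 : ℂ)) (𝓝 0) := by
    simpa using (continuous_mul_const c).tendsto 0
  refine ((Complex.exp_sub_sum_range_isBigO_pow n).comp_tendsto hc).trans ?_
  simp only [Function.comp_def, mul_pow, mul_comm _ (c ^ n)]
  exact (isBigO_refl _ _).const_mul_left _

theorem IsPrimitiveRoot.rootAvgExp_sub_isBigO {ζ : ℂ} {N : ℕ} (hζ : IsPrimitiveRoot ζ N)
    (hN : 0 < N) :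
    (fun z => rootAvgExp ζ N z - (1 + z ^ N / N !)) =O[𝓝 0] (· ^ (N + 1)) := by
  have hsum := IsBigO.sum fun k (_ : k ∈ range N) => isBigO_exp_mul_sub_sum_range (ζ ^ k) (N + 1)
  refine (hsum.const_mul_left (1 / (N : ℂ))).congr_left fun z => ?_
  rw [rootAvgExp, ← hζ.avg_sum_range_pow_div_factorial hN z, ← mul_sub, ← sum_sub_distrib,
    Finset.sum_apply]

theorem IsPrimitiveRoot.tendsto_natCast_mul_rootAvgExp_sub_one {ζ : ℂ} {N : ℕ}
    (hζ : IsPrimitiveRoot ζ N) (hN : 0 < N) {z : ℕ → ℂ} {a : ℂ} (hz : Tendsto z atTop (𝓝 0))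
    (hza : Tendsto (fun n => n * z n ^ N) atTop (𝓝 a)) :
    Tendsto (fun n => n * (rootAvgExp ζ N (z n) - 1)) atTop (𝓝 (a / N !)) := by
  have hrem :
      Tendsto (fun n => n * (rootAvgExp ζ N (z n) - (1 + z n ^ N / N !))) atTop (𝓝 0) := by
    have hO := (isBigO_refl (fun n : ℕ => (n : ℂ)) atTop).mul
      ((hζ.rootAvgExp_sub_isBigO hN).comp_tendsto hz)
    refine hO.trans_tendsto ?_
    simpa [pow_succ, mul_assoc] using hza.mul hz
  refine (zero_add (a / N !) ▸ hrem.add (hza.div_const (N ! : ℂ))).congr fun n => ?_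
  ring

theorem tendsto_one_add_pow_floor_mul_exp_of_tendsto {g : ℕ → ℂ} {w : ℂ} {t : ℝ} (ht : 0 ≤ t)
    (hg : Tendsto (fun n : ℕ => n * g n) atTop (𝓝 w)) :
    Tendsto (fun n : ℕ => (1 + g n) ^ ⌊(n : ℝ) * t⌋₊) atTop (𝓝 (exp (t * w))) := by
  have hratio : Tendsto (fun n : ℕ => (⌊(n : ℝ) * t⌋₊ / n : ℂ)) atTop (𝓝 t) := by
    have h := (tendsto_nat_floor_mul_div_atTop ht).comp (tendsto_natCast_atTop_atTop (R := ℝ))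
    refine (Complex.continuous_ofReal.tendsto t).comp h |>.congr fun n => ?_
    simp [mul_comm t]
  have hg0 : Tendsto g atTop (𝓝 0) := by
    refine (zero_mul w ▸ (tendsto_inv_atTop_nhds_zero_nat (𝕜 := ℂ)).mul hg).congr' ?_
    filter_upwards [eventually_ne_atTop 0] with n hn
    rw [inv_mul_cancel_left₀ (Nat.cast_ne_zero.mpr hn)]
  have hlog := (hratio.mul (Complex.tendsto_nat_mul_log_one_add_of_tendsto hg)).cexp
  refine hlog.congr' ?_
  filter_upwards [eventually_ne_atTop 0, hg0.eventually_ne (show (0 : ℂ) ≠ -1 by simp)]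
    with n hn hgn
  have hne : 1 + g n ≠ 0 := fun h => hgn (eq_neg_of_add_eq_zero_right h)
  rw [← mul_assoc, div_mul_cancel₀ _ (Nat.cast_ne_zero.mpr hn), Complex.exp_nat_mul,
    Complex.exp_log hne]

theorem tendsto_div_rpow_inv_atTop_zero (K : ℂ) {N : ℕ} (hN : 0 < N) :
    Tendsto (fun n : ℕ => K / (((n : ℝ) ^ (N : ℝ)⁻¹ : ℝ) : ℂ)) atTop (𝓝 0) := by
  have hc := (tendsto_rpow_atTop (by positivity : (0 : ℝ) < (N : ℝ)⁻¹)).comp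
    tendsto_natCast_atTop_atTop
  have := (Complex.continuous_ofReal.tendsto 0).comp (tendsto_inv_atTop_zero.comp hc)
  simpa [div_eq_mul_inv] using this.const_mul K

theorem natCast_mul_div_rpow_inv_pow (K : ℂ) {N : ℕ} (hN : N ≠ 0) {n : ℕ} (hn : n ≠ 0) :
    (n : ℂ) * (K / (((n : ℝ) ^ (N : ℝ)⁻¹ : ℝ) : ℂ)) ^ N = K ^ N := by
  rw [div_pow, ← ofReal_pow, Real.rpow_inv_natCast_pow (Nat.cast_nonneg n) hN, ofReal_natCast,
    mul_div_cancel₀ _ (Nat.cast_ne_zero.mpr hn)]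

/-- for every t ≥ 0 and λ ∈ ℂ, the characteristic functions
φ_n(t,λ) = ((1/N)Σ_{k<N} exp(iλβω_k/n^{1/N}))^{⌊nt⌋} of the continuous-time random walk
W_n(t) converge to exp(i^N λ^N α t / N!). -/
theorem char_fun_Wn_limit (N : ℕ) (hN : 2 < N) (α β : ℂ) (hβ : β ^ N = α)
    (t : ℝ) (ht : 0 ≤ t) (l : ℂ) :
    Filter.Tendsto
      (fun n : ℕ =>
        ((1 / (N : ℂ)) *
          ∑ k ∈ Finset.range N,
            Complex.exp (Complex.I * l * β * Complex.exp (2 * Real.pi * Complex.I * k / N) /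
              ((((n : ℝ) ^ ((N : ℝ)⁻¹)) : ℝ) : ℂ))) ^ ⌊(n : ℝ) * t⌋₊)
      Filter.atTop
      (nhds (Complex.exp (Complex.I ^ N * l ^ N * α * (t : ℂ) / (Nat.factorial N : ℂ)))) := by
  have hN0 : 0 < N := by omega
  set ζ := Complex.exp (2 * π * I / N)
  have hζ : IsPrimitiveRoot ζ N := Complex.isPrimitiveRoot_exp N hN0.ne'
  have hroots : ∀ k : ℕ, Complex.exp (2 * π * I * k / N) = ζ ^ k := fun k => by
    rw [← Complex.exp_nat_mul]; ring_nf
  set K := I * l * β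
  have hscaled : Tendsto (fun n : ℕ => n * (K / (((n : ℝ) ^ (N : ℝ)⁻¹ : ℝ) : ℂ)) ^ N) atTop
      (𝓝 (K ^ N)) :=
    tendsto_const_nhds.congr' <| (eventually_ne_atTop 0).mono fun n hn =>
      (natCast_mul_div_rpow_inv_pow K hN0.ne' hn).symm
  have hlim := tendsto_one_add_pow_floor_mul_exp_of_tendsto ht
    (hζ.tendsto_natCast_mul_rootAvgExp_sub_one hN0 (tendsto_div_rpow_inv_atTop_zero K hN0) hscaled)
  convert hlim using 3 with n
  · simp only [add_sub_cancel, rootAvgExp, hroots]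
    congr 2 with k
    ring_nf
  · rw [mul_pow, mul_pow, hβ]
    ring
end
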